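/- Let (u, ρ) be a smooth solution of the periodic two-component μ-Hunter-Saxton system on [0,∞). Then for all t ≥ 0 and x ∈ ℝ, ∂_t(u_x²)(t,x) − ∂_x((u(t,x)+γ) u_x(t,x)²) = −4μ₀ u(t,x) u_x(t,x) − u_x(t,x) ρ(t,x)² + 4μ₀² u_x(t,x) + μ₁² u_x(t,x). -/

import Mathlib

/-!
Along a solution, the first equation says `μ'(t) = ∂ₓ flux` for a periodic function `flux`,
where `μ` is the mean of `u`; a periodic function with constant derivative has derivative `0`.
Hence `μ` is conserved and `flux t` is constant in `x`, so it equals its mean over a period, which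
one integration by parts evaluates to `2 μ² + E / 2` with `E = ∫₀¹ (u_x² + ρ²)`. This expresses
`u_tx` through `u`, `ρ` and `E`; with it and the second equation, `∂ₜ (u_x² + ρ²)` is again the
`x`-derivative of a periodic function, so `E` is conserved too and equals `μ₁²`. Multiplying the
formula for `u_tx` by `2 u_x` gives the identity.
-/

open MeasureTheory Real Set Filter

open scoped ContDiff
open Function (uncurry Periodic)

noncomputable def partialT (f : ℝ → ℝ → ℝ) : ℝ → ℝ → ℝ :=
  fun t x => deriv (fun s => f s x) t

noncomputable def partialX (f : ℝ → ℝ → ℝ) : ℝ → ℝ → ℝ := fun t => deriv (f t)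

prefix:max "∂ₜ" => partialT
prefix:max "∂ₓ" => partialX

section PartialDerivatives

variable {f : ℝ → ℝ → ℝ}

theorem hasDerivAt_partialX (hf : Differentiable ℝ (uncurry f)) (t x : ℝ) :
    HasDerivAt (f t) (∂ₓ f t x) x :=
  (hf.comp (differentiable_const t |>.prodMk differentiable_id)).differentiableAt.hasDerivAt

theorem hasDerivAt_partialT (hf : Differentiable ℝ (uncurry f)) (t x : ℝ) :
    HasDerivAt (fun s => f s x) (∂ₜ f t x) t :=
  (hf.comp (differentiable_id.prodMk (differentiable_const x))).differentiableAt.hasDerivAt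

theorem uncurry_partialX (hf : Differentiable ℝ (uncurry f)) :
    uncurry (∂ₓ f) = fun p => fderiv ℝ (uncurry f) p (0, 1) := by
  funext ⟨t, x⟩
  exact ((hf (t, x)).hasFDerivAt.comp_hasDerivAt x
    ((hasDerivAt_const x t).prodMk (hasDerivAt_id x))).deriv

theorem uncurry_partialT (hf : Differentiable ℝ (uncurry f)) :
    uncurry (∂ₜ f) = fun p => fderiv ℝ (uncurry f) p (1, 0) := by
  funext ⟨t, x⟩
  exact ((hf (t, x)).hasFDerivAt.comp_hasDerivAt t
    ((hasDerivAt_id t).prodMk (hasDerivAt_const t x))).deriv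

theorem contDiff_partialX (hf : ContDiff ℝ ∞ (uncurry f)) :
    ContDiff ℝ ∞ (uncurry (∂ₓ f)) := by
  rw [uncurry_partialX (hf.differentiable (by simp))]
  exact (hf.fderiv_right (by simp)).clm_apply contDiff_const

theorem contDiff_partialT (hf : ContDiff ℝ ∞ (uncurry f)) :
    ContDiff ℝ ∞ (uncurry (∂ₜ f)) := by
  rw [uncurry_partialT (hf.differentiable (by simp))]
  exact (hf.fderiv_right (by simp)).clm_apply contDiff_const

theorem partialT_partialX (hf : ContDiff ℝ ∞ (uncurry f)) :
    ∂ₜ (∂ₓ f) = ∂ₓ (∂ₜ f) := by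
  have hD : Differentiable ℝ (uncurry f) := hf.differentiable (by simp)
  have hD2 : Differentiable ℝ (fderiv ℝ (uncurry f)) :=
    (hf.fderiv_right (m := ∞) (by simp)).differentiable (by simp)
  funext t x
  have hT := congrFun
    (uncurry_partialT ((contDiff_partialX hf).differentiable (by simp))) (t, x)
  have hX := congrFun
    (uncurry_partialX ((contDiff_partialT hf).differentiable (by simp))) (t, x)
  simp only [Function.uncurry_apply_pair] at hT hX
  rw [hT, hX, uncurry_partialX hD, uncurry_partialT hD,
    fderiv_clm_apply (hD2 _) (differentiableAt_const _),
    fderiv_clm_apply (hD2 _) (differentiableAt_const _)]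
  have hsymm := (hf.contDiffAt (x := (t, x))).isSymmSndFDerivAt
    (by simp; exact WithTop.coe_le_coe.mpr le_top)
  simpa using hsymm.eq (1, 0) (0, 1)

theorem Function.Periodic.deriv {𝕜 F : Type*} [NontriviallyNormedField 𝕜]
    [NormedAddCommGroup F] [NormedSpace 𝕜 F] {g : 𝕜 → F} {c : 𝕜} (h : Periodic g c) :
    Periodic (deriv g) c :=
  fun x => by rw [← deriv_comp_add_const, h.funext]

theorem periodic_partialX {c : ℝ} (h : ∀ t, Periodic (f t) c) (t : ℝ) :
    Periodic (∂ₓ f t) c :=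
  (h t).deriv

theorem periodic_partialT {c : ℝ} (h : ∀ t, Periodic (f t) c) (t : ℝ) :
    Periodic (∂ₜ f t) c :=
  fun x => by simp only [partialT, fun s => h s x]

end PartialDerivatives

theorem Function.Periodic.intervalIntegral_deriv_eq_zero {g g' : ℝ → ℝ} {T : ℝ}
    (hg : Periodic g T) (hderiv : ∀ x, HasDerivAt g (g' x) x) (hg' : Continuous g') :
    ∫ x in 0..T, g' x = 0 := by
  rw [intervalIntegral.integral_eq_sub_of_hasDerivAt (fun x _ => hderiv x)
    (hg'.intervalIntegrable 0 T), sub_eq_zero]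
  simpa using hg 0

theorem Function.Periodic.eq_zero_of_hasDerivAt_const {g : ℝ → ℝ} {T a : ℝ}
    (hg : Periodic g T) (hT : T ≠ 0) (hderiv : ∀ x, HasDerivAt g a x) : a = 0 := by
  have hconst : ∀ x, HasDerivAt (fun y => g y - a * y) 0 x := fun x =>
    ((hderiv x).sub ((hasDerivAt_id' x).const_mul a)).congr_deriv (by ring)
  have h := is_const_of_deriv_eq_zero (fun x => (hconst x).differentiableAt)
    (fun x => (hconst x).deriv) T 0
  have hT' : g T = g 0 := by simpa using hg 0
  simp only [hT', mul_zero, sub_zero, sub_eq_self] at h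
  exact (mul_eq_zero.mp h).resolve_right hT

theorem hasDerivAt_intervalIntegral_partialT {F : ℝ → ℝ → ℝ}
    (hF : ContDiff ℝ 1 (uncurry F)) (a b t : ℝ) :
    HasDerivAt (fun s => ∫ y in a..b, F s y) (∫ y in a..b, ∂ₜ F t y) t := by
  have hD : Differentiable ℝ (uncurry F) := hF.differentiable one_ne_zero
  have hcont : Continuous (uncurry (∂ₜ F)) := by
    rw [uncurry_partialT hD]
    exact (hF.continuous_fderiv one_ne_zero).clm_apply continuous_const
  obtain ⟨C, hC⟩ := (isCompact_Icc.prod isCompact_uIcc).exists_bound_of_continuousOn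
    (s := Icc (t - 1) (t + 1) ×ˢ uIcc a b) hcont.continuousOn
  refine (intervalIntegral.hasDerivAt_integral_of_dominated_loc_of_deriv_le
    (bound := fun _ => C) (Metric.ball_mem_nhds t one_pos) ?_ ?_ ?_ ?_
    intervalIntegrable_const ?_).2
  · exact .of_forall fun s => (hF.continuous.uncurry_left s).aestronglyMeasurable
  · exact (hF.continuous.uncurry_left t).intervalIntegrable a b
  · exact (hcont.uncurry_left t).aestronglyMeasurable
  · refine .of_forall fun y hy s hs => hC (s, y) ⟨?_, uIoc_subset_uIcc hy⟩
    rw [Metric.mem_ball, Real.dist_eq, abs_sub_lt_iff] at hs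
    constructor <;> linarith
  · exact .of_forall fun y _ s _ => hasDerivAt_partialT hD s y

theorem eq_of_deriv_eq_zero_of_nonneg {g : ℝ → ℝ} (hg : Differentiable ℝ g)
    (hzero : ∀ s, 0 ≤ s → deriv g s = 0) {t : ℝ} (ht : 0 ≤ t) : g t = g 0 :=
  constant_of_has_deriv_right_zero hg.continuous.continuousOn
    (fun s hs => hzero s hs.1 ▸ (hg s).hasDerivAt.hasDerivWithinAt) t ⟨ht, le_rfl⟩

noncomputable def mean (u : ℝ → ℝ → ℝ) (t : ℝ) : ℝ := ∫ y in (0:ℝ)..1, u t y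

noncomputable def energyDensity (u ρ : ℝ → ℝ → ℝ) : ℝ → ℝ → ℝ :=
  fun t x => ∂ₓ u t x ^ 2 + ρ t x ^ 2

noncomputable def energy (u ρ : ℝ → ℝ → ℝ) (t : ℝ) : ℝ :=
  ∫ y in (0:ℝ)..1, energyDensity u ρ t y

structure IsMuHSSolution (γ : ℝ) (u ρ : ℝ → ℝ → ℝ) : Prop where
  smooth_u : ContDiff ℝ ∞ (uncurry u)
  smooth_ρ : ContDiff ℝ ∞ (uncurry ρ)
  periodic_u : ∀ t, Periodic (u t) 1
  periodic_ρ : ∀ t, Periodic (ρ t) 1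
  eq_u : ∀ t x, 0 ≤ t →
    deriv (mean u) t - ∂ₜ (∂ₓ (∂ₓ u)) t x
      = 2 * mean u t * ∂ₓ u t x - 2 * ∂ₓ u t x * ∂ₓ (∂ₓ u) t x
        - u t x * ∂ₓ (∂ₓ (∂ₓ u)) t x + ρ t x * ∂ₓ ρ t x - γ * ∂ₓ (∂ₓ (∂ₓ u)) t x
  eq_ρ : ∀ t x, 0 ≤ t →
    ∂ₜ ρ t x = deriv (fun y => ρ t y * u t y) x + γ * ∂ₓ ρ t x

-- The first equation of the system says `deriv (mean u) t = ∂ₓ (flux γ u ρ) t x`.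
noncomputable def flux (γ : ℝ) (u ρ : ℝ → ℝ → ℝ) (t x : ℝ) : ℝ :=
  ∂ₜ (∂ₓ u) t x + (2 * mean u t * u t x - u t x * ∂ₓ (∂ₓ u) t x
    - ∂ₓ u t x ^ 2 / 2 + ρ t x ^ 2 / 2 - γ * ∂ₓ (∂ₓ u) t x)

theorem contDiff_energyDensity {u ρ : ℝ → ℝ → ℝ} (hu : ContDiff ℝ ∞ (uncurry u))
    (hρ : ContDiff ℝ ∞ (uncurry ρ)) : ContDiff ℝ ∞ (uncurry (energyDensity u ρ)) :=
  ((contDiff_partialX hu).pow 2).add (hρ.pow 2)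

namespace IsMuHSSolution

variable {γ : ℝ} {u ρ : ℝ → ℝ → ℝ} (hs : IsMuHSSolution γ u ρ)
include hs

theorem periodic_flux (t : ℝ) : Periodic (flux γ u ρ t) 1 := by
  have pu := hs.periodic_u
  have pux := periodic_partialX pu
  have puxx := periodic_partialX pux
  intro x
  simp only [flux, pu t x, pux t x, puxx t x, periodic_partialT pux t x, hs.periodic_ρ t x]

theorem hasDerivAt_flux {t : ℝ} (ht : 0 ≤ t) (x : ℝ) :
    HasDerivAt (flux γ u ρ t) (deriv (mean u) t) x := by
  have hu := hs.smooth_u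
  have hux := contDiff_partialX hu
  have huxx := contDiff_partialX hux
  have dx {f : ℝ → ℝ → ℝ} (hf : ContDiff ℝ ∞ (uncurry f)) :
      HasDerivAt (f t) (∂ₓ f t x) x :=
    hasDerivAt_partialX (hf.differentiable (by simp)) t x
  have hrest := ((((dx hu).const_mul (2 * mean u t)).sub ((dx hu).fun_mul (dx huxx))).sub
    (((dx hux).fun_pow 2).div_const 2)).add (((dx hs.smooth_ρ).fun_pow 2).div_const 2)
    |>.sub ((dx huxx).const_mul γ)
  refine ((dx (contDiff_partialT hux)).add hrest).congr_deriv ?_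
  rw [← partialT_partialX hux]
  linear_combination -hs.eq_u t x ht

theorem deriv_mean_eq_zero {t : ℝ} (ht : 0 ≤ t) : deriv (mean u) t = 0 :=
  (hs.periodic_flux t).eq_zero_of_hasDerivAt_const one_ne_zero (hs.hasDerivAt_flux ht)

theorem mean_eq {t : ℝ} (ht : 0 ≤ t) : mean u t = mean u 0 :=
  eq_of_deriv_eq_zero_of_nonneg (fun s => (hasDerivAt_intervalIntegral_partialT
    (hs.smooth_u.of_le (by simp)) 0 1 s).differentiableAt) (fun _ => hs.deriv_mean_eq_zero) ht

theorem integral_flux (t : ℝ) :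
    ∫ y in (0:ℝ)..1, flux γ u ρ t y = 2 * mean u t ^ 2 + energy u ρ t / 2 := by
  have hu := hs.smooth_u
  have hux := contDiff_partialX hu
  have dx {f : ℝ → ℝ → ℝ} (hf : ContDiff ℝ ∞ (uncurry f)) (x : ℝ) :
      HasDerivAt (f t) (∂ₓ f t x) x :=
    hasDerivAt_partialX (hf.differentiable (by simp)) t x
  have cont {f : ℝ → ℝ → ℝ} (hf : ContDiff ℝ ∞ (uncurry f)) : Continuous (f t) :=
    hf.continuous.uncurry_left t
  have cu := cont hu
  have cux := cont hux
  have cuxx := cont (contDiff_partialX hux)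
  have cutx := cont (contDiff_partialT hux)
  have cρ := cont hs.smooth_ρ
  -- `flux = ∂ₓ (∂ₜ u - (u + γ) ∂ₓ u) + 2 (mean u) u + energyDensity / 2`
  have hΨ : ∀ x, HasDerivAt (fun x => ∂ₜ u t x - (u t x + γ) * ∂ₓ u t x)
      (flux γ u ρ t x - (2 * mean u t * u t x + energyDensity u ρ t x / 2)) x := fun x =>
    ((dx (contDiff_partialT hu) x).sub (((dx hu x).add_const γ).fun_mul (dx hux x))).congr_deriv
      (by rw [← partialT_partialX hu]; unfold flux energyDensity; ring)
  have hΨper : Periodic (fun x => ∂ₜ u t x - (u t x + γ) * ∂ₓ u t x) 1 := fun x => by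
    simp only [periodic_partialT hs.periodic_u t x, hs.periodic_u t x,
      periodic_partialX hs.periodic_u t x]
  have hflux : Continuous (flux γ u ρ t) := by unfold flux; fun_prop
  have hdens : Continuous (energyDensity u ρ t) := by unfold energyDensity; fun_prop
  have h0 := hΨper.intervalIntegral_deriv_eq_zero hΨ (by fun_prop)
  have ii {g : ℝ → ℝ} (hg : Continuous g) : IntervalIntegrable g volume 0 1 :=
    hg.intervalIntegrable 0 1
  rw [intervalIntegral.integral_sub (ii hflux) (ii (by fun_prop)),
    intervalIntegral.integral_add (ii (by fun_prop)) (ii (by fun_prop)),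
    intervalIntegral.integral_const_mul,
    intervalIntegral.integral_div, sub_eq_zero] at h0
  rw [h0]
  simp only [mean, energy]
  ring

theorem flux_eq {t : ℝ} (ht : 0 ≤ t) (x : ℝ) :
    flux γ u ρ t x = 2 * mean u t ^ 2 + energy u ρ t / 2 := by
  have hd (y : ℝ) : HasDerivAt (flux γ u ρ t) 0 y :=
    hs.deriv_mean_eq_zero ht ▸ hs.hasDerivAt_flux ht y
  calc flux γ u ρ t x = ∫ _ in (0:ℝ)..1, flux γ u ρ t x := by simp
    _ = ∫ y in (0:ℝ)..1, flux γ u ρ t y := intervalIntegral.integral_congr fun y _ =>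
        is_const_of_deriv_eq_zero (fun y => (hd y).differentiableAt) (fun y => (hd y).deriv) x y
    _ = 2 * mean u t ^ 2 + energy u ρ t / 2 := hs.integral_flux t

theorem integral_partialT_energyDensity {t : ℝ} (ht : 0 ≤ t) :
    ∫ y in (0:ℝ)..1, ∂ₜ (energyDensity u ρ) t y = 0 := by
  have hu := hs.smooth_u
  have hρ := hs.smooth_ρ
  have hux := contDiff_partialX hu
  have dx {f : ℝ → ℝ → ℝ} (hf : ContDiff ℝ ∞ (uncurry f)) (x : ℝ) :
      HasDerivAt (f t) (∂ₓ f t x) x :=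
    hasDerivAt_partialX (hf.differentiable (by simp)) t x
  have dt {f : ℝ → ℝ → ℝ} (hf : ContDiff ℝ ∞ (uncurry f)) (x : ℝ) :
      HasDerivAt (fun s => f s x) (∂ₜ f t x) t :=
    hasDerivAt_partialT (hf.differentiable (by simp)) t x
  set c := 2 * mean u t ^ 2 + energy u ρ t / 2
  let Φ : ℝ → ℝ := fun x =>
    2 * c * u t x - 2 * mean u t * u t x ^ 2 + (u t x + γ) * (∂ₓ u t x ^ 2 + ρ t x ^ 2)
  have hΦ (x : ℝ) : HasDerivAt Φ (∂ₜ (energyDensity u ρ) t x) x := by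
    have hdens : ∂ₜ (energyDensity u ρ) t x
        = 2 * ∂ₓ u t x * ∂ₜ (∂ₓ u) t x + 2 * ρ t x * ∂ₜ ρ t x :=
      (((dt hux x).fun_pow 2).add ((dt hρ x).fun_pow 2)).deriv.trans (by ring)
    have hρu : deriv (fun y => ρ t y * u t y) x = ∂ₓ ρ t x * u t x + ρ t x * ∂ₓ u t x :=
      ((dx hρ x).fun_mul (dx hu x)).deriv
    have hflux := hs.flux_eq ht x
    unfold flux at hflux
    have hΦ₁ := ((dx hu x).const_mul (2 * c)).sub (((dx hu x).fun_pow 2).const_mul (2 * mean u t))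
    have hΦ₂ := ((dx hu x).add_const γ).fun_mul
      (((dx hux x).fun_pow 2).fun_add ((dx hρ x).fun_pow 2))
    refine (hΦ₁.add hΦ₂).congr_deriv ?_
    rw [hdens, hs.eq_ρ t x ht, hρu]
    linear_combination (-2 * ∂ₓ u t x) * hflux
  have hΦper : Periodic Φ 1 := fun x => by
    simp only [Φ, hs.periodic_u t x, periodic_partialX hs.periodic_u t x, hs.periodic_ρ t x]
  exact hΦper.intervalIntegral_deriv_eq_zero hΦ
    ((contDiff_partialT (contDiff_energyDensity hu hρ)).continuous.uncurry_left t)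

theorem energy_eq {t : ℝ} (ht : 0 ≤ t) : energy u ρ t = energy u ρ 0 := by
  have hderiv (s : ℝ) := hasDerivAt_intervalIntegral_partialT
    ((contDiff_energyDensity hs.smooth_u hs.smooth_ρ).of_le (by simp)) 0 1 s
  exact eq_of_deriv_eq_zero_of_nonneg (fun s => (hderiv s).differentiableAt)
    (fun _ hs₀ => (hderiv _).deriv.trans (hs.integral_partialT_energyDensity hs₀)) ht

end IsMuHSSolution

theorem stmt_11
    (γ : ℝ) (u ρ : ℝ → ℝ → ℝ) (μ₀ μ₁ : ℝ)
    (hu : ContDiff ℝ (⊤ : ℕ∞) (Function.uncurry u))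
    (hρ : ContDiff ℝ (⊤ : ℕ∞) (Function.uncurry ρ))
    (huper : ∀ t x : ℝ, u t (x + 1) = u t x)
    (hρper : ∀ t x : ℝ, ρ t (x + 1) = ρ t x)
    (heq1 : ∀ t x : ℝ, 0 ≤ t →
      deriv (fun s => ∫ y in (0:ℝ)..1, u s y) t
        - deriv (fun s => deriv (deriv (u s)) x) t
      = 2 * (∫ y in (0:ℝ)..1, u t y) * deriv (u t) x
        - 2 * deriv (u t) x * deriv (deriv (u t)) x
        - u t x * deriv (deriv (deriv (u t))) x
        + ρ t x * deriv (ρ t) x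
        - γ * deriv (deriv (deriv (u t))) x)
    (heq2 : ∀ t x : ℝ, 0 ≤ t →
      deriv (fun s => ρ s x) t
      = deriv (fun y => ρ t y * u t y) x + γ * deriv (ρ t) x)
    (hμ₀ : μ₀ = ∫ y in (0:ℝ)..1, u 0 y)
    (hμ₁ : μ₁ = Real.sqrt (∫ y in (0:ℝ)..1, ((deriv (u 0) y) ^ 2 + (ρ 0 y) ^ 2)))
    : ∀ t x : ℝ, 0 ≤ t →
      deriv (fun s => (deriv (u s) x) ^ 2) t
        - deriv (fun y => (u t y + γ) * (deriv (u t) y) ^ 2) x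
      = -(4 * μ₀) * u t x * deriv (u t) x - deriv (u t) x * (ρ t x) ^ 2
        + 4 * μ₀ ^ 2 * deriv (u t) x + μ₁ ^ 2 * deriv (u t) x := by
  intro t x ht
  have hs : IsMuHSSolution γ u ρ := ⟨hu, hρ, huper, hρper, heq1, heq2⟩
  have hμ : mean u t = μ₀ := (hs.mean_eq ht).trans hμ₀.symm
  have hE : energy u ρ t = μ₁ ^ 2 := by
    rw [hs.energy_eq ht, hμ₁, sq_sqrt (intervalIntegral.integral_nonneg zero_le_one
      fun y _ => by positivity)]
    rfl
  have hflux := hs.flux_eq ht x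
  unfold flux at hflux
  rw [hμ, hE] at hflux
  have hDu := hu.differentiable (by simp)
  have hDux := (contDiff_partialX hu).differentiable (by simp)
  have hLt : deriv (fun s => deriv (u s) x ^ 2) t = 2 * ∂ₓ u t x * ∂ₜ (∂ₓ u) t x :=
    ((hasDerivAt_partialT hDux t x).fun_pow 2).deriv.trans (by ring)
  have hLx : deriv (fun y => (u t y + γ) * deriv (u t) y ^ 2) x
      = ∂ₓ u t x ^ 3 + 2 * (u t x + γ) * ∂ₓ u t x * ∂ₓ (∂ₓ u) t x :=
    (((hasDerivAt_partialX hDu t x).add_const γ).fun_mul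
      ((hasDerivAt_partialX hDux t x).fun_pow 2)).deriv.trans (by ring)
  rw [hLt, hLx]
  simp only [partialX, partialT] at hflux ⊢
  linear_combination 2 * deriv (u t) x * hflux
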